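/- The trace monoid T(P₄) = ⟨α, β, γ, δ ∣ αβ = βα, βγ = γβ, γδ = δγ⟩ (as a monoid presentation) embeds into the direct product M₂ × M₂ × M₂ of three copies of the free monoid M₂ = {x, y}* of rank 2; explicitly, the monoid homomorphism determined by α ↦ (x, y, 1), β ↦ (x, 1, x), γ ↦ (1, x, 1), δ ↦ (y, x, y) is injective. -/

import Mathlib

/-!
Each of `α, β, δ` is singled out by one coordinate of its image: `α` is the only generator whose
second coordinate begins with `y`, `β` the only one whose third coordinate begins with `x`, `δ` the
only one whose first coordinate begins with `y`, and the generators with empty image in that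
coordinate commute with it. So if a word has the same image as a word beginning with `α`, `β` or
`δ`, that letter occurs in it preceded only by letters commuting with it; it can be moved to the
front and cancelled. Of two words with equal images, either both begin with `γ` or one begins with
another letter, and induction on length concludes.
-/

/-- The defining relations of the trace monoid `T(P₄)` on generators `α, β, γ, δ`
(numbered `0, 1, 2, 3`): consecutive generators commute. -/
def TP4rel : FreeMonoid (Fin 4) → FreeMonoid (Fin 4) → Prop := fun a b =>
  (a = FreeMonoid.of 0 * FreeMonoid.of 1 ∧ b = FreeMonoid.of 1 * FreeMonoid.of 0) ∨
  (a = FreeMonoid.of 1 * FreeMonoid.of 2 ∧ b = FreeMonoid.of 2 * FreeMonoid.of 1) ∨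
  (a = FreeMonoid.of 2 * FreeMonoid.of 3 ∧ b = FreeMonoid.of 3 * FreeMonoid.of 2)

/-- The trace monoid on the path with four vertices. -/
abbrev TP4 : Type := PresentedMonoid TP4rel

theorem List.exists_eq_append_cons_of_flatMap_eq_cons {α β : Type*} {g : α → List β} {w : List α}
    {b : β} {t : List β} (h : w.flatMap g = b :: t) :
    ∃ p d q, w = p ++ d :: q ∧ (∀ e ∈ p, g e = []) ∧ (g d).head? = some b := by
  induction w with
  | nil => simp at h
  | cons a w ih =>
    cases ha : g a with
    | nil =>
      rw [flatMap_cons, ha, nil_append] at h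
      obtain ⟨p, d, q, rfl, hp, hd⟩ := ih h
      exact ⟨a :: p, d, q, rfl, forall_mem_cons.2 ⟨ha, hp⟩, hd⟩
    | cons b' _ =>
      rw [flatMap_cons, ha, cons_append, cons.injEq] at h
      exact ⟨[], a, w, rfl, by simp, by simp [ha, h.1]⟩

namespace TP4

open PresentedMonoid

def word (l : List (Fin 4)) : TP4 := mk TP4rel (FreeMonoid.ofList l)

lemma word_cons (a : Fin 4) (l : List (Fin 4)) : word (a :: l) = of TP4rel a * word l := rfl

lemma word_append (p q : List (Fin 4)) : word (p ++ q) = word p * word q := rfl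

lemma word_surjective : Function.Surjective word :=
  fun x ↦ (surjective_mk x).imp fun _ h ↦ h

lemma commute_of_of {i j : Fin 4} (h : (i : ℕ) ≤ j + 1 ∧ (j : ℕ) ≤ i + 1) :
    Commute (of TP4rel i) (of TP4rel j) := by
  have h01 : Commute (of TP4rel 0) (of TP4rel 1) := mk_eq_mk_of_rel (Or.inl ⟨rfl, rfl⟩)
  have h12 : Commute (of TP4rel 1) (of TP4rel 2) := mk_eq_mk_of_rel (Or.inr (Or.inl ⟨rfl, rfl⟩))
  have h23 : Commute (of TP4rel 2) (of TP4rel 3) := mk_eq_mk_of_rel (Or.inr (Or.inr ⟨rfl, rfl⟩))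
  fin_cases i <;> fin_cases j <;>
    first | exact Commute.refl _ | assumption | exact Commute.symm ‹_› | simp at h

lemma commute_word {c : Fin 4} {p : List (Fin 4)}
    (h : ∀ d ∈ p, Commute (of TP4rel c) (of TP4rel d)) :
    Commute (of TP4rel c) (word p) := by
  induction p with
  | nil => exact Commute.one_right _
  | cons d p ih => exact (h d (by simp)).mul_right (ih fun e he ↦ h e (by simp [he]))

/-- The three coordinates of the images of `α, β, γ, δ`, with `x = true` and `y = false`. -/
def img₁ : Fin 4 → List Bool := ![[true], [true], [], [false]]
def img₂ : Fin 4 → List Bool := ![[false], [], [true], [true]]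
def img₃ : Fin 4 → List Bool := ![[], [true], [], [false]]

def toCube : TP4 →* FreeMonoid Bool × FreeMonoid Bool × FreeMonoid Bool :=
  lift (fun i ↦ (.ofList (img₁ i), .ofList (img₂ i), .ofList (img₃ i)))
    (by rintro a b (⟨rfl, rfl⟩ | ⟨rfl, rfl⟩ | ⟨rfl, rfl⟩) <;> rfl)

lemma toCube_word (l : List (Fin 4)) :
    toCube (word l) =
      (.ofList (l.flatMap img₁), .ofList (l.flatMap img₂), .ofList (l.flatMap img₃)) := by
  induction l with
  | nil => rfl
  | cons a l ih => rw [word_cons, map_mul, ih]; rfl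

lemma eq_nil_of_toCube_word_eq_one {v : List (Fin 4)} (h : toCube (word v) = 1) : v = [] := by
  rw [toCube_word] at h
  have h₁ : v.flatMap img₁ = [] := congrArg (fun x ↦ x.1.toList) h
  have h₂ : v.flatMap img₂ = [] := congrArg (fun x ↦ x.2.1.toList) h
  rw [List.flatMap_eq_nil_iff] at h₁ h₂
  cases v with
  | nil => rfl
  | cons d v =>
    have : img₁ d ≠ [] ∨ img₂ d ≠ [] := by fin_cases d <;> decide
    exact this.elim (absurd (h₁ d (by simp))) (absurd (h₂ d (by simp)))

lemma toCube_word_cancel {c : Fin 4} {u v : List (Fin 4)}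
    (h : toCube (word (c :: u)) = toCube (word (c :: v))) : toCube (word u) = toCube (word v) := by
  rw [word_cons, word_cons, map_mul, map_mul] at h
  exact mul_left_cancel h

def IsMarker (g : Fin 4 → List Bool) (c : Fin 4) (b : Bool) : Prop :=
  (∀ d, (g d).head? = some b → d = c) ∧ ∀ d, g d = [] → (c : ℕ) ≤ d + 1 ∧ (d : ℕ) ≤ c + 1

lemma exists_word_eq_cons_of_isMarker {g : Fin 4 → List Bool} {c : Fin 4} {b : Bool}
    (hm : IsMarker g c b) {w : List (Fin 4)} {t : List Bool} (h : w.flatMap g = b :: t) :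
    ∃ r, word w = word (c :: r) ∧ r.length < w.length := by
  obtain ⟨p, d, q, rfl, hp, hd⟩ := List.exists_eq_append_cons_of_flatMap_eq_cons h
  obtain rfl := hm.1 d hd
  have hc : Commute (of TP4rel d) (word p) :=
    commute_word fun e he ↦ commute_of_of (hm.2 e (hp e he))
  refine ⟨p ++ q, ?_, by simp⟩
  rw [word_append, word_cons, word_cons, word_append, ← mul_assoc, ← hc.eq, mul_assoc]

lemma exists_word_eq_cons {c : Fin 4} (hc : c ≠ 2) {w v : List (Fin 4)}
    (h : toCube (word w) = toCube (word (c :: v))) :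
    ∃ r, word w = word (c :: r) ∧ r.length < w.length := by
  rw [toCube_word, toCube_word] at h
  have h₁ : w.flatMap img₁ = (c :: v).flatMap img₁ := congrArg (fun x ↦ x.1.toList) h
  have h₂ : w.flatMap img₂ = (c :: v).flatMap img₂ := congrArg (fun x ↦ x.2.1.toList) h
  have h₃ : w.flatMap img₃ = (c :: v).flatMap img₃ := congrArg (fun x ↦ x.2.2.toList) h
  fin_cases c
  · exact exists_word_eq_cons_of_isMarker (b := false) ⟨by decide, by decide⟩ h₂
  · exact exists_word_eq_cons_of_isMarker (b := true) ⟨by decide, by decide⟩ h₃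
  · exact absurd rfl hc
  · exact exists_word_eq_cons_of_isMarker (b := false) ⟨by decide, by decide⟩ h₁

theorem word_eq_of_toCube_eq :
    ∀ u v : List (Fin 4), toCube (word u) = toCube (word v) → word u = word v
  | [], v, h => by rw [eq_nil_of_toCube_word_eq_one h.symm]
  | a :: u, [], h => absurd (eq_nil_of_toCube_word_eq_one h) (List.cons_ne_nil a u)
  | a :: u, b :: v, h => by
    by_cases hb : b = 2
    · by_cases ha : a = 2
      · subst ha hb
        rw [word_cons, word_cons, word_eq_of_toCube_eq u v (toCube_word_cancel h)]
      · obtain ⟨r, hr, -⟩ := exists_word_eq_cons ha h.symm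
        rw [hr] at h ⊢
        rw [word_cons, word_cons, word_eq_of_toCube_eq u r (toCube_word_cancel h)]
    · obtain ⟨r, hr, hlen⟩ := exists_word_eq_cons hb h
      rw [hr] at h ⊢
      rw [word_cons, word_cons, word_eq_of_toCube_eq r v (toCube_word_cancel h)]
termination_by u => u.length
decreasing_by all_goals simp only [List.length_cons] at *; omega

theorem toCube_injective : Function.Injective toCube := by
  intro x y h
  obtain ⟨u, rfl⟩ := word_surjective x
  obtain ⟨v, rfl⟩ := word_surjective y
  exact word_eq_of_toCube_eq u v h

end TP4

/-- The monoid homomorphism `T(P₄) → M₂ × M₂ × M₂` determined by `α ↦ (x, y, 1)`,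
`β ↦ (x, 1, x)`, `γ ↦ (1, x, 1)`, `δ ↦ (y, x, y)` is injective, where `M₂` is the free
monoid on `{x, y}` (here `x = true`, `y = false`). -/
theorem traceMonoid_P4_embeds_M2_cube
    (ψ : TP4 →* FreeMonoid Bool × FreeMonoid Bool × FreeMonoid Bool)
    (hα : ψ (PresentedMonoid.of TP4rel 0) = (FreeMonoid.of true, FreeMonoid.of false, 1))
    (hβ : ψ (PresentedMonoid.of TP4rel 1) = (FreeMonoid.of true, 1, FreeMonoid.of true))
    (hγ : ψ (PresentedMonoid.of TP4rel 2) = (1, FreeMonoid.of true, 1))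
    (hδ : ψ (PresentedMonoid.of TP4rel 3) =
      (FreeMonoid.of false, FreeMonoid.of true, FreeMonoid.of false)) :
    Function.Injective ψ := by
  obtain rfl : ψ = TP4.toCube := PresentedMonoid.ext _ fun i ↦ by
    fin_cases i
    exacts [hα, hβ, hγ, hδ]
  exact TP4.toCube_injective
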